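/- For integers a, b ∈ ℤ with a, b ≥ 0, if q(a) = q(b+1) or q(a) = q(b-1) then 2q(a) + 2q(b) - (q(a) - q(b))² = 0, where q(n) = n(n+1); conversely, if 2q(a) + 2q(b) = (q(a) - q(b))² then q(a) = q(b+1) or q(a) = q(b-1). -/
import Mathlib


/-- `q n = n (n + 1)`. -/
def qval (n : ℤ) : ℤ := n * (n + 1)

/-- For nonnegative integers `a, b`: if `q a = q (b+1)` or `q a = q (b-1)` then
`2 q a + 2 q b - (q a - q b)^2 = 0`; conversely if `2 q a + 2 q b = (q a - q b)^2`
then `q a = q (b+1)` or `q a = q (b-1)`. -/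
theorem qval_quadratic_criterion (a b : ℤ) (ha : 0 ≤ a) (hb : 0 ≤ b) :
    ((qval a = qval (b + 1) ∨ qval a = qval (b - 1)) →
      2 * qval a + 2 * qval b - (qval a - qval b) ^ 2 = 0) ∧
    (2 * qval a + 2 * qval b = (qval a - qval b) ^ 2 →
      qval a = qval (b + 1) ∨ qval a = qval (b - 1)) := by
  constructor
  · rintro (h | h) <;> rw [h] <;> unfold qval <;> ring
  · intro h
    unfold qval at h ⊢
    have key : (a * (a + 1) - b * (b + 1) - (2 * b + 2)) *
        (a * (a + 1) - b * (b + 1) + 2 * b) = 0 := by nlinarith [h]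
    rcases mul_eq_zero.mp key with h1 | h1
    · left; linear_combination h1
    · right; linear_combination h1
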